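/- arXiv:1804.01489 — 5 statements merged into one kernel-verified Lean document; each statement's English description precedes it below -/
import Mathlib

section
/- Let P be an m×m real symmetric matrix and S an m×n real matrix. Then the number of positive eigenvalues of SᵀPS (counted with multiplicity) is at most the number of positive eigenvalues of P, and at least the number of positive eigenvalues of P minus the nullity of Sᵀ. -/
open Matrix

/-- Number of strictly positive eigenvalues (with multiplicity) of a real matrix,
when it is symmetric (Hermitian); junk value 0 otherwise. -/
noncomputable def posEigen {m : ℕ} (M : Matrix (Fin m) (Fin m) ℝ) : ℕ :=
  if h : M.IsHermitian then (Finset.univ.filter fun i => 0 < h.eigenvalues i).card else 0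

/-- Dimension of the kernel of (the linear map induced by) a real matrix. -/
noncomputable def nullity {m n : ℕ} (M : Matrix (Fin m) (Fin n) ℝ) : ℕ :=
  Module.finrank ℝ (LinearMap.ker M.mulVecLin)

/-!
By Sylvester's law of inertia, the number of positive eigenvalues of a symmetric matrix is
`sigPos` of its quadratic form: the largest dimension of a subspace on which the form is positive
definite. The form of `Sᵀ * P * S` is the pullback of the form of `P` along `S`. A positive
definite subspace of the pullback is mapped injectively by `S` onto one for `P`. Conversely, a
positive definite subspace `W` for `P` meets the range of `S` in dimension at least
`dim W - codim (range S)`, and this intersection lifts back along a section of `S`. Finally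
`codim (range S) = nullity Sᵀ`, because `S` and `Sᵀ` have the same rank.
-/

open Module QuadraticMap

namespace QuadraticForm

variable {𝕜 E F : Type*} [Field 𝕜] [LinearOrder 𝕜] [AddCommGroup E] [Module 𝕜 E]
  [AddCommGroup F] [Module 𝕜 F] [FiniteDimensional 𝕜 F]

lemma sigPos_comp_le [FiniteDimensional 𝕜 E] (Q : QuadraticForm 𝕜 F) (f : E →ₗ[𝕜] F) :
    sigPos (Q.comp f) ≤ sigPos Q := by
  obtain ⟨V, hV, hVpos⟩ := exists_finrank_eq_sigPos_and_posDef (Q.comp f)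
  have hinj : Function.Injective (f.domRestrict V) := by
    rw [← LinearMap.ker_eq_bot, LinearMap.ker_eq_bot']
    intro x hfx
    by_contra hx0
    simpa [show f x = 0 from hfx] using hVpos x hx0
  rw [← hV, ← LinearMap.finrank_range_of_inj hinj]
  refine le_sigPos_of_posDef Q fun ⟨y, hy⟩ hy0 => ?_
  obtain ⟨x, rfl⟩ := hy
  have hx0 : x ≠ 0 := by rintro rfl; simp at hy0
  simpa using hVpos x hx0

lemma sigPos_le_sigPos_comp_subtype_add_finrank_quotient (Q : QuadraticForm 𝕜 F)
    (p : Submodule 𝕜 F) : sigPos Q ≤ sigPos (Q.comp p.subtype) + finrank 𝕜 (F ⧸ p) := by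
  obtain ⟨W, hW, hWpos⟩ := exists_finrank_eq_sigPos_and_posDef Q
  set W' := W.comap p.subtype
  have hW'pos : ((Q.comp p.subtype).restrict W').PosDef := fun ⟨x, hx⟩ hx0 =>
    hWpos ⟨x, hx⟩ fun h => hx0 (Subtype.ext (Subtype.ext congr(($h : F))))
  have hW' : finrank 𝕜 W' = finrank 𝕜 ↥(p ⊓ W) := by
    rw [← Submodule.map_comap_subtype, Submodule.finrank_map_subtype_eq]
  have hdim := Submodule.finrank_sup_add_finrank_inf_eq p W
  have hsup := Submodule.finrank_le (p ⊔ W)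
  have hquot := Submodule.finrank_quotient_add_finrank p
  have := le_sigPos_of_posDef _ hW'pos
  omega

lemma sigPos_le_sigPos_comp_add_finrank_quotient_range [FiniteDimensional 𝕜 E]
    (Q : QuadraticForm 𝕜 F) (f : E →ₗ[𝕜] F) :
    sigPos Q ≤ sigPos (Q.comp f) + finrank 𝕜 (F ⧸ LinearMap.range f) := by
  obtain ⟨g, hg⟩ := f.rangeRestrict.exists_rightInverse_of_surjective f.range_rangeRestrict
  have hcomp : (Q.comp f).comp g = Q.comp (LinearMap.range f).subtype := by
    ext x
    have hfg : f (g x) = x := congrArg Subtype.val (LinearMap.congr_fun hg x)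
    simp [hfg]
  calc sigPos Q
      ≤ sigPos (Q.comp (LinearMap.range f).subtype) + finrank 𝕜 (F ⧸ LinearMap.range f) :=
        sigPos_le_sigPos_comp_subtype_add_finrank_quotient Q _
    _ ≤ sigPos (Q.comp f) + finrank 𝕜 (F ⧸ LinearMap.range f) := by
        rw [← hcomp]
        gcongr
        exact sigPos_comp_le _ _

end QuadraticForm

namespace Matrix

variable {ι κ : Type*} [Fintype ι] [Fintype κ]

lemma toQuadraticForm'_transpose_mul_mul [DecidableEq ι] [DecidableEq κ] {R : Type*}
    [CommRing R] (P : Matrix ι ι R) (S : Matrix ι κ R) :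
    (Sᵀ * P * S).toQuadraticForm' = P.toQuadraticForm'.comp S.mulVecLin := by
  ext x
  simp [toQuadraticForm', toLinearMap₂'_apply', ← mulVec_mulVec, dotProduct_mulVec,
    vecMul_transpose]

lemma toQuadraticForm'_diagonal [DecidableEq ι] {R : Type*} [CommRing R] (w : ι → R) :
    (diagonal w).toQuadraticForm' = weightedSumSquares R w := by
  ext x
  simp [toQuadraticForm', toLinearMap₂'_apply', dotProduct, mulVec_diagonal, mul_left_comm]

lemma IsHermitian.equivalent_weightedSumSquares [DecidableEq ι] {M : Matrix ι ι ℝ}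
    (hM : M.IsHermitian) :
    Equivalent M.toQuadraticForm' (weightedSumSquares ℝ hM.eigenvalues) := by
  set U := hM.eigenvectorUnitary
  have hdiag : (U : Matrix ι ι ℝ)ᵀ * M * U = diagonal hM.eigenvalues := by
    simpa [Unitary.conjStarAlgAut_star_apply, star_eq_conjTranspose,
      conjTranspose_eq_transpose_of_trivial] using hM.conjStarAlgAut_star_eigenvectorUnitary
  refine ⟨QuadraticMap.IsometryEquiv.symm ⟨UnitaryGroup.toLinearEquiv U, fun y => ?_⟩⟩
  rw [← toQuadraticForm'_diagonal, ← hdiag, toQuadraticForm'_transpose_mul_mul]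
  rfl

lemma finrank_quotient_range_mulVecLin {K : Type*} [Field K] (A : Matrix ι κ K) :
    finrank K ((ι → K) ⧸ LinearMap.range A.mulVecLin) =
      finrank K (LinearMap.ker Aᵀ.mulVecLin) := by
  have hquot := Submodule.finrank_quotient_add_finrank (LinearMap.range A.mulVecLin)
  have hrank := LinearMap.finrank_range_add_finrank_ker Aᵀ.mulVecLin
  have htr := A.rank_transpose
  rw [rank, rank] at htr
  omega

end Matrix

lemma posEigen_eq_sigPos {m : ℕ} {M : Matrix (Fin m) (Fin m) ℝ} (hM : M.IsHermitian) :
    posEigen M = sigPos M.toQuadraticForm' := by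
  rw [posEigen, dif_pos hM,
    QuadraticForm.sigPos_of_equiv_weightedSumSquares hM.equivalent_weightedSumSquares,
    Set.ncard_eq_toFinset_card', Set.toFinset_ofPred]

theorem stmt0 {m n : ℕ} (P : Matrix (Fin m) (Fin m) ℝ) (hP : P.IsHermitian)
    (S : Matrix (Fin m) (Fin n) ℝ) :
    posEigen (Sᵀ * P * S) ≤ posEigen P ∧
      posEigen P ≤ posEigen (Sᵀ * P * S) + nullity Sᵀ := by
  have hQ : (Sᵀ * P * S).IsHermitian := by
    simpa [conjTranspose_eq_transpose_of_trivial] using isHermitian_mul_mul_conjTranspose Sᵀ hP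
  rw [posEigen_eq_sigPos hQ, posEigen_eq_sigPos hP, toQuadraticForm'_transpose_mul_mul, nullity,
    ← finrank_quotient_range_mulVecLin]
  exact ⟨QuadraticForm.sigPos_comp_le _ _,
    QuadraticForm.sigPos_le_sigPos_comp_add_finrank_quotient_range _ _⟩
end

section
/- Let P be a real symmetric m×m matrix, R a nonsingular real m×m matrix with P = Rᵀ diag(I_{π(P)}, −I_{ν(P)}, 0) R, and let R₁ be the matrix formed from the first π(P)+ν(P) rows of R. Then for any real m×n matrix S, SᵀPS = (R₁S)ᵀ diag(I_{π(P)}, −I_{ν(P)}) (R₁S), and nullity((R₁S)ᵀ) ≤ nullity(Sᵀ). -/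
open Matrix

noncomputable def negEigen {m : ℕ} (M : Matrix (Fin m) (Fin m) ℝ) : ℕ :=
  if h : M.IsHermitian then (Finset.univ.filter fun i => h.eigenvalues i < 0).card else 0

/-! The diagonal factor vanishes beyond the first `π(P) + ν(P)` indices, so only the first
`π(P) + ν(P)` rows of `R` contribute to `Rᵀ D R`. These rows are linearly independent since `R`
is invertible, hence `R₁ᵀ` is injective and `(R₁ S)ᵀ = Sᵀ R₁ᵀ` has no larger kernel than `Sᵀ`. -/

namespace Matrix

variable {ι κ n α : Type*} [Fintype ι] [Fintype κ] [DecidableEq κ]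

theorem transpose_mul_diagonal_mul_eq_submatrix [DecidableEq ι] [CommSemiring α] (R : Matrix κ n α)
    {e : ι → κ} (he : Function.Injective e) {d : κ → α} (hd : ∀ k ∉ Set.range e, d k = 0) :
    Rᵀ * diagonal d * R = (R.submatrix e id)ᵀ * diagonal (d ∘ e) * R.submatrix e id := by
  ext a b
  rw [mul_apply, mul_apply]
  simp only [mul_diagonal, transpose_apply, submatrix_apply, id, Function.comp_apply]
  exact (Fintype.sum_of_injective e he _ _ (fun k hk => by simp [hd k hk]) fun _ => rfl).symm

theorem mulVec_injective_transpose_submatrix [Field α] {R : Matrix κ κ α} (hR : IsUnit R)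
    {e : ι → κ} (he : Function.Injective e) :
    Function.Injective (R.submatrix e id)ᵀ.mulVec := by
  rw [mulVec_injective_iff, col_transpose]
  exact (linearIndependent_rows_iff_isUnit.2 hR).comp e he

end Matrix

theorem nullity_mul_le_of_mulVec_injective {k l m : ℕ} (A : Matrix (Fin k) (Fin l) ℝ)
    {B : Matrix (Fin l) (Fin m) ℝ} (hB : Function.Injective B.mulVec) :
    nullity (A * B) ≤ nullity A := by
  rw [nullity, nullity, mulVecLin_mul, LinearMap.ker_comp]
  exact (Submodule.equivMapOfInjective _ hB _).finrank_eq.trans_le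
    (Submodule.finrank_mono (Submodule.map_comap_le _ _))

theorem stmt4_general {m n : ℕ} (P : Matrix (Fin m) (Fin m) ℝ)
    (R : Matrix (Fin m) (Fin m) ℝ) (hR : IsUnit R.det)
    (hpq : posEigen P + negEigen P ≤ m)
    -- P = Rᵀ · diag(I_{π(P)}, −I_{ν(P)}, 0) · R :
    (hPRR : P = Rᵀ *
      (Matrix.of fun i j : Fin m => if i = j then
          (if (i : ℕ) < posEigen P then (1 : ℝ)
           else if (i : ℕ) < posEigen P + negEigen P then -1 else 0) else 0) * R)
    (S : Matrix (Fin m) (Fin n) ℝ)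
    -- R₁ is formed from the first π(P)+ν(P) rows of R :
    (R₁ : Matrix (Fin (posEigen P + negEigen P)) (Fin m) ℝ)
    (hR₁ : R₁ = Matrix.of fun i j => R (Fin.castLE hpq i) j) :
    Sᵀ * P * S = (R₁ * S)ᵀ *
      (Matrix.of fun i j : Fin (posEigen P + negEigen P) => if i = j then
          (if (i : ℕ) < posEigen P then (1 : ℝ) else -1) else 0) * (R₁ * S) ∧
    nullity (R₁ * S)ᵀ ≤ nullity Sᵀ := by
  replace hR₁ : R₁ = R.submatrix (Fin.castLE hpq) id := hR₁
  constructor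
  · have hPR₁ : P = R₁ᵀ * (Matrix.of fun i j : Fin (posEigen P + negEigen P) => if i = j then
        (if (i : ℕ) < posEigen P then (1 : ℝ) else -1) else 0) * R₁ := by
      refine hPRR.trans ?_
      rw [hR₁]
      refine (transpose_mul_diagonal_mul_eq_submatrix R (Fin.castLE_injective hpq) ?_).trans ?_
      · intro k hk_range
        have hk : posEigen P + negEigen P ≤ k := by
          by_contra! hlt
          exact hk_range ⟨⟨k, hlt⟩, rfl⟩
        rw [if_neg (by omega), if_neg (by omega)]
      · congr 2
        ext i j
        simp [diagonal]
    conv_lhs => rw [hPR₁]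
    simp only [transpose_mul, Matrix.mul_assoc]
  · rw [transpose_mul, hR₁]
    exact nullity_mul_le_of_mulVec_injective _
      (mulVec_injective_transpose_submatrix ((isUnit_iff_isUnit_det R).2 hR)
        (Fin.castLE_injective hpq))

theorem stmt4 {m n : ℕ} (P : Matrix (Fin m) (Fin m) ℝ) (hP : P.IsHermitian)
    (R : Matrix (Fin m) (Fin m) ℝ) (hR : IsUnit R.det)
    (hpq : posEigen P + negEigen P ≤ m)
    -- P = Rᵀ · diag(I_{π(P)}, −I_{ν(P)}, 0) · R :
    (hPRR : P = Rᵀ *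
      (Matrix.of fun i j : Fin m => if i = j then
          (if (i : ℕ) < posEigen P then (1 : ℝ)
           else if (i : ℕ) < posEigen P + negEigen P then -1 else 0) else 0) * R)
    (S : Matrix (Fin m) (Fin n) ℝ)
    -- R₁ is formed from the first π(P)+ν(P) rows of R :
    (R₁ : Matrix (Fin (posEigen P + negEigen P)) (Fin m) ℝ)
    (hR₁ : R₁ = Matrix.of fun i j => R (Fin.castLE hpq i) j) :
    Sᵀ * P * S = (R₁ * S)ᵀ *
      (Matrix.of fun i j : Fin (posEigen P + negEigen P) => if i = j then
          (if (i : ℕ) < posEigen P then (1 : ℝ) else -1) else 0) * (R₁ * S) ∧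
    nullity (R₁ * S)ᵀ ≤ nullity Sᵀ :=
  stmt4_general P R hR hpq hPRR S R₁ hR₁
end

section
/- Let P ∈ ℝ^{m×m} be symmetric, S ∈ ℝ^{m×n}, and suppose P = XᵀΣX where X ∈ ℝ^{(n₁+n₂)×m} has full row rank and Σ = diag(I_{n₁}, −I_{n₂}). Then ν(P) ≥ rank(SᵀP) − π(SᵀPS), i.e., the number of negative eigenvalues of P is at least the rank of SᵀP minus the number of positive eigenvalues of SᵀPS. -/
/-!
Put `Y = X S`, so that `Sᵀ P S = Yᵀ Σ Y` and `rank (Sᵀ P) ≤ rank Y`. On the subspace `K` of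
vectors `v` whose image `Y v` has vanishing `Σ`-negative coordinates, the form `v ↦ vᵀ Yᵀ Σ Y v`
is a sum of squares, positive as soon as `Y v ≠ 0`; hence `dim Y(K) ≤ π(Sᵀ P S)`, by comparing
with the positive eigenspaces. Since `K` is cut out by `n₂ = ν(P)` linear conditions,
`rank Y ≤ n₂ + dim Y(K)`.
-/

open Matrix

open Module LinearMap

theorem LinearMap.finrank_range_le_finrank_range_add_finrank_map_ker {K V W U : Type*} [Field K]
    [AddCommGroup V] [Module K V] [FiniteDimensional K V] [AddCommGroup W] [Module K W]
    [AddCommGroup U] [Module K U] (f : V →ₗ[K] W) (g : V →ₗ[K] U) :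
    finrank K (range f) ≤ finrank K (range g) + finrank K ((ker g).map f) := by
  have hf := f.finrank_range_add_finrank_ker
  have hg := g.finrank_range_add_finrank_ker
  have hfg := (f.domRestrict (ker g)).finrank_range_add_finrank_ker
  rw [range_domRestrict, ker_domRestrict, ← Submodule.finrank_map_subtype_eq,
    Submodule.map_comap_subtype] at hfg
  have := Submodule.finrank_mono (inf_le_right : ker g ⊓ ker f ≤ ker f)
  omega

theorem Matrix.dotProduct_transpose_mul_diagonal_mul_mulVec {ι κ R : Type*} [Fintype ι]
    [Fintype κ] [DecidableEq ι] [CommSemiring R] (Y : Matrix ι κ R) (d : ι → R) (v : κ → R) :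
    v ⬝ᵥ (Yᵀ * diagonal d * Y) *ᵥ v = ∑ i, d i * (Y *ᵥ v) i ^ 2 := by
  rw [← mulVec_mulVec, ← mulVec_mulVec, dotProduct_mulVec, vecMul_transpose]
  simp only [dotProduct, mulVec_diagonal]
  exact Finset.sum_congr rfl fun i _ => by ring

theorem Matrix.IsHermitian.dotProduct_mulVec_eq_sum_eigenvalues {ι : Type*} [Fintype ι]
    [DecidableEq ι] {A : Matrix ι ι ℝ} (hA : A.IsHermitian) (v : ι → ℝ) :
    v ⬝ᵥ A *ᵥ v = ∑ i, hA.eigenvalues i * ((hA.eigenvectorUnitary : Matrix ι ι ℝ)ᵀ *ᵥ v) i ^ 2 := by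
  conv_lhs => rw [hA.spectral_theorem, Unitary.conjStarAlgAut_apply]
  rw [← dotProduct_transpose_mul_diagonal_mul_mulVec]
  simp [star_eq_conjTranspose]

theorem Matrix.IsHermitian.finrank_le_posEigen {k : ℕ} {A : Matrix (Fin k) (Fin k) ℝ} (hA : A.IsHermitian)
    (U : Submodule ℝ (Fin k → ℝ)) (hU : ∀ x ∈ U, x ≠ 0 → 0 < x ⬝ᵥ A *ᵥ x) :
    finrank ℝ U ≤ posEigen A := by
  let V : Matrix (Fin k) (Fin k) ℝ := hA.eigenvectorUnitary
  let coords : U →ₗ[ℝ] ({i // 0 < hA.eigenvalues i} → ℝ) :=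
    funLeft ℝ ℝ Subtype.val ∘ₗ Vᵀ.mulVecLin ∘ₗ U.subtype
  have h_inj : Function.Injective coords := by
    rw [← ker_eq_bot, ker_eq_bot']
    rintro ⟨x, hx⟩ hx0
    have h_vanish (i : Fin k) (hi : 0 < hA.eigenvalues i) : (Vᵀ *ᵥ x) i = 0 :=
      congrFun hx0 ⟨i, hi⟩
    by_contra hne
    have h_nonpos : x ⬝ᵥ A *ᵥ x ≤ 0 := by
      rw [hA.dotProduct_mulVec_eq_sum_eigenvalues]
      refine Finset.sum_nonpos fun i _ => ?_
      rcases lt_or_ge 0 (hA.eigenvalues i) with hi | hi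
      · rw [h_vanish i hi]; simp
      · exact mul_nonpos_of_nonpos_of_nonneg hi (sq_nonneg _)
    exact (hU x hx fun h => hne (by simp [h])).not_ge h_nonpos
  calc finrank ℝ U ≤ finrank ℝ ({i // 0 < hA.eigenvalues i} → ℝ) :=
        finrank_le_finrank_of_injective h_inj
    _ = posEigen A := by rw [posEigen, dif_pos hA, finrank_pi, Fintype.card_subtype]

theorem Matrix.IsHermitian.finrank_map_le_posEigen {k : ℕ} {A : Matrix (Fin k) (Fin k) ℝ} (hA : A.IsHermitian)
    {W : Type*} [AddCommGroup W] [Module ℝ W] (f : (Fin k → ℝ) →ₗ[ℝ] W)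
    (K : Submodule ℝ (Fin k → ℝ)) (hK : ∀ x ∈ K, f x ≠ 0 → 0 < x ⬝ᵥ A *ᵥ x) :
    finrank ℝ (K.map f) ≤ posEigen A := by
  -- A linear section `s` of `f` over `K.map f` carries it isomorphically onto a subspace of `K`
  -- on which `f` vanishes only at `0`.
  obtain ⟨s, hs⟩ := (f.domRestrict K).rangeRestrict.exists_rightInverse_of_surjective
    (range_rangeRestrict _)
  have hfs (w) : f (s w) = w := congrArg Subtype.val (congrFun (congrArg DFunLike.coe hs) w)
  have h_inj : Function.Injective (K.subtype ∘ₗ s) := fun w w' h => by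
    simpa [hfs] using congrArg f h
  calc finrank ℝ (K.map f) = finrank ℝ (range (K.subtype ∘ₗ s)) := by
        rw [finrank_range_of_inj h_inj, range_domRestrict]
    _ ≤ posEigen A := hA.finrank_le_posEigen _ <| by
        rintro _ ⟨w, rfl⟩ hw
        refine hK _ (s w).2 ?_
        rw [LinearMap.comp_apply, Submodule.subtype_apply, hfs, ne_eq, ZeroMemClass.coe_eq_zero]
        rintro rfl
        simp at hw

theorem Matrix.rank_le_card_nonpos_add_posEigen {ι : Type*} [Fintype ι] [DecidableEq ι] {n : ℕ}
    (Y : Matrix ι (Fin n) ℝ) (d : ι → ℝ) :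
    Y.rank ≤ Fintype.card {i // d i ≤ 0} + posEigen (Yᵀ * diagonal d * Y) := by
  let g := funLeft ℝ ℝ (Subtype.val : {i // d i ≤ 0} → ι) ∘ₗ Y.mulVecLin
  have hA : (Yᵀ * diagonal d * Y).IsHermitian := by
    simpa [conjTranspose_eq_transpose_of_trivial] using
      isHermitian_conjTranspose_mul_mul Y (isHermitian_diagonal d)
  have h_pos (v) (hv : v ∈ ker g) (hYv : Y.mulVecLin v ≠ 0) :
      0 < v ⬝ᵥ (Yᵀ * diagonal d * Y) *ᵥ v := by
    have h_vanish (i : ι) (hi : d i ≤ 0) : (Y *ᵥ v) i = 0 := congrFun hv ⟨i, hi⟩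
    obtain ⟨i₀, hi₀⟩ := Function.ne_iff.mp hYv
    rw [dotProduct_transpose_mul_diagonal_mul_mulVec]
    refine Finset.sum_pos' (fun i _ => ?_) ⟨i₀, Finset.mem_univ _, ?_⟩
    · rcases le_or_gt (d i) 0 with hi | hi
      · rw [h_vanish i hi]; simp
      · positivity
    · have hd : 0 < d i₀ := lt_of_not_ge fun h => hi₀ (h_vanish i₀ h)
      have : (Y *ᵥ v) i₀ ≠ 0 := hi₀
      positivity
  calc Y.rank ≤ finrank ℝ (range g) + finrank ℝ ((ker g).map Y.mulVecLin) :=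
        finrank_range_le_finrank_range_add_finrank_map_ker _ _
    _ ≤ Fintype.card {i // d i ≤ 0} + posEigen (Yᵀ * diagonal d * Y) := by
        gcongr
        · simpa using (range g).finrank_le
        · exact hA.finrank_map_le_posEigen _ _ h_pos

theorem Fin.card_subtype_le_val (n₁ n₂ : ℕ) :
    Fintype.card {i : Fin (n₁ + n₂) // n₁ ≤ (i : ℕ)} = n₂ := by
  have := Finset.card_filter_add_card_filter_not (s := Finset.univ)
    fun i : Fin (n₁ + n₂) => (i : ℕ) < n₁
  rw [Fin.card_filter_val_lt, Finset.card_univ, Fintype.card_fin] at this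
  simp_rw [Fintype.card_subtype, ← not_lt]
  omega

theorem stmt6_general {m n n₁ n₂ : ℕ} (P : Matrix (Fin m) (Fin m) ℝ)
    (S : Matrix (Fin m) (Fin n) ℝ)
    (X : Matrix (Fin (n₁ + n₂)) (Fin m) ℝ)
    (hn₂ : n₂ = negEigen P)
    (hPX : P = Xᵀ *
      (Matrix.of fun i j : Fin (n₁ + n₂) => if i = j then
          (if (i : ℕ) < n₁ then (1 : ℝ) else -1) else 0) * X) :
    (Sᵀ * P).rank ≤ negEigen P + posEigen (Sᵀ * P * S) := by
  set d : Fin (n₁ + n₂) → ℝ := fun i => if (i : ℕ) < n₁ then 1 else -1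
  change P = Xᵀ * diagonal d * X at hPX
  have h_rank : (Sᵀ * P).rank ≤ (X * S).rank := by
    calc (Sᵀ * P).rank = ((X * S)ᵀ * (diagonal d * X)).rank := by
          rw [hPX, transpose_mul, Matrix.mul_assoc, Matrix.mul_assoc]
      _ ≤ (X * S).rank := (rank_mul_le_left _ _).trans (rank_transpose _).le
  have h_card : Fintype.card {i // d i ≤ 0} = n₂ := by
    refine (Fintype.card_congr (Equiv.subtypeEquivRight fun i => ?_)).trans
      (Fin.card_subtype_le_val n₁ n₂)
    simp only [d]
    split_ifs <;> norm_num <;> omega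
  have h_form : (X * S)ᵀ * diagonal d * (X * S) = Sᵀ * P * S := by
    rw [hPX, transpose_mul]; simp only [Matrix.mul_assoc]
  calc (Sᵀ * P).rank ≤ (X * S).rank := h_rank
    _ ≤ negEigen P + posEigen (Sᵀ * P * S) := by
      simpa only [h_card, h_form, hn₂] using (X * S).rank_le_card_nonpos_add_posEigen d

theorem stmt6 {m n n₁ n₂ : ℕ} (P : Matrix (Fin m) (Fin m) ℝ) (hP : P.IsHermitian)
    (S : Matrix (Fin m) (Fin n) ℝ)
    (X : Matrix (Fin (n₁ + n₂)) (Fin m) ℝ) (hX : X.rank = n₁ + n₂)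
    (hn₁ : n₁ = posEigen P) (hn₂ : n₂ = negEigen P)
    (hPX : P = Xᵀ *
      (Matrix.of fun i j : Fin (n₁ + n₂) => if i = j then
          (if (i : ℕ) < n₁ then (1 : ℝ) else -1) else 0) * X) :
    (Sᵀ * P).rank ≤ negEigen P + posEigen (Sᵀ * P * S) :=
  stmt6_general P S X hn₂ hPX
end

section
/- Let P ∈ ℝ^{m×m} be symmetric and S ∈ ℝ^{m×n}. Then π(P) ≥ rank(SᵀP) − ν(SᵀPS) and ν(P) ≥ rank(SᵀP) − π(SᵀPS). -/
open Matrix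

namespace Stmt7Aux

open Finset Module Submodule

lemma sum_dot {k m : ℕ} (f : Fin k → (Fin m → ℝ)) (y : Fin m → ℝ) :
    (∑ i, f i) ⬝ᵥ y = ∑ i, f i ⬝ᵥ y := by
  simp only [dotProduct, Finset.sum_apply, Finset.sum_mul]
  exact Finset.sum_comm

lemma dot_sum' {k m : ℕ} (f : Fin k → (Fin m → ℝ)) (y : Fin m → ℝ) :
    y ⬝ᵥ (∑ i, f i) = ∑ i, y ⬝ᵥ f i := by
  simp only [dotProduct, Finset.sum_apply, Finset.mul_sum]
  exact Finset.sum_comm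

/-- dot product of two combinations of an orthonormal family. -/
lemma dot_sum {m : ℕ} (u : Fin m → (Fin m → ℝ))
    (horth : ∀ i j, u i ⬝ᵥ u j = if i = j then 1 else 0) (a b : Fin m → ℝ) :
    (∑ i, a i • u i) ⬝ᵥ (∑ j, b j • u j) = ∑ i, a i * b i := by
  rw [sum_dot]
  refine Finset.sum_congr rfl fun i _ => ?_
  rw [smul_dotProduct, dot_sum']
  simp [dotProduct_smul, horth, mul_ite, Finset.sum_ite_eq]

/-- mulVec in terms of an eigenbasis. -/
lemma mulVec_repr {m : ℕ} (M : Matrix (Fin m) (Fin m) ℝ)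
    (u : Basis (Fin m) ℝ (Fin m → ℝ)) (lam : Fin m → ℝ)
    (heig : ∀ i, M *ᵥ u i = lam i • u i) (x : Fin m → ℝ) :
    M *ᵥ x = ∑ i, (u.repr x i * lam i) • u i := by
  conv_lhs => rw [← u.sum_repr x, ← mulVecLin_apply, map_sum]
  refine Finset.sum_congr rfl fun i _ => ?_
  rw [LinearMap.map_smul, mulVecLin_apply, heig i, smul_smul]

/-- quadratic form in terms of an orthonormal eigenbasis. -/
lemma quad_repr {m : ℕ} (M : Matrix (Fin m) (Fin m) ℝ)
    (u : Basis (Fin m) ℝ (Fin m → ℝ)) (lam : Fin m → ℝ)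
    (horth : ∀ i j, u i ⬝ᵥ u j = if i = j then 1 else 0)
    (heig : ∀ i, M *ᵥ u i = lam i • u i) (x : Fin m → ℝ) :
    x ⬝ᵥ (M *ᵥ x) = ∑ i, lam i * (u.repr x i) ^ 2 := by
  have h1 : M *ᵥ x = ∑ i, (u.repr x i * lam i) • u i := mulVec_repr M u lam heig x
  have h2 : x = ∑ i, u.repr x i • u i := (u.sum_repr x).symm
  calc x ⬝ᵥ (M *ᵥ x)
      = (∑ i, u.repr x i • u i) ⬝ᵥ (∑ i, (u.repr x i * lam i) • u i) := by
        rw [← h1, ← h2]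
    _ = ∑ i, u.repr x i * (u.repr x i * lam i) :=
        dot_sum u horth _ _
    _ = ∑ i, lam i * (u.repr x i) ^ 2 := by
        refine Finset.sum_congr rfl fun i _ => ?_; ring

/-- Key index lemma. -/
lemma index_le {m : ℕ} (M : Matrix (Fin m) (Fin m) ℝ)
    (u : Basis (Fin m) ℝ (Fin m → ℝ)) (lam : Fin m → ℝ)
    (horth : ∀ i j, u i ⬝ᵥ u j = if i = j then 1 else 0)
    (heig : ∀ i, M *ᵥ u i = lam i • u i)
    (V : Submodule ℝ (Fin m → ℝ))
    (h1 : ∀ v ∈ V, 0 ≤ v ⬝ᵥ (M *ᵥ v))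
    (h2 : ∀ v ∈ V, M *ᵥ v = 0 → v = 0) :
    finrank ℝ V ≤ (Finset.univ.filter fun i => 0 < lam i).card := by
  by_contra hcon
  push_neg at hcon
  set p := (Finset.univ.filter fun i => 0 < lam i).card with hp
  set E : Submodule ℝ (Fin m → ℝ) :=
    Submodule.span ℝ (u '' {i | ¬ 0 < lam i}) with hE
  have hEcard : finrank ℝ E = (Finset.univ.filter fun i => ¬ 0 < lam i).card := by
    have hli : LinearIndependent ℝ (fun i : {i | ¬ 0 < lam i} => u i) :=
      u.linearIndependent.comp _ Subtype.val_injective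
    rw [hE, Set.image_eq_range, finrank_span_eq_card hli]
    simp [Fintype.card_subtype]
  have hsum : p + (Finset.univ.filter fun i => ¬ 0 < lam i).card = m := by
    rw [hp, Finset.card_filter_add_card_filter_not]
    simp
  have hVE : finrank ℝ ↥(V ⊔ E) + finrank ℝ ↥(V ⊓ E) = finrank ℝ V + finrank ℝ E :=
    Submodule.finrank_sup_add_finrank_inf_eq V E
  have hle : finrank ℝ ↥(V ⊔ E) ≤ m := by
    simpa using (V ⊔ E).finrank_le
  have hpos : 0 < finrank ℝ ↥(V ⊓ E) := by omega
  have hne : V ⊓ E ≠ ⊥ := by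
    intro h
    rw [h, finrank_bot] at hpos
    omega
  obtain ⟨v, hvVE, hv0⟩ := (Submodule.ne_bot_iff _).1 hne
  obtain ⟨hvV, hvE⟩ := Submodule.mem_inf.1 hvVE
  have hsupp : ∀ i, 0 < lam i → u.repr v i = 0 := by
    intro i hi
    have hmem := (Basis.mem_span_image u).1 hvE
    by_contra hne'
    exact (hmem (Finsupp.mem_support_iff.2 hne')) hi
  have hquad : 0 ≤ ∑ i, lam i * (u.repr v i) ^ 2 := by
    rw [← quad_repr M u lam horth heig v]; exact h1 v hvV
  have hterm : ∀ i ∈ Finset.univ, lam i * (u.repr v i : ℝ) ^ 2 ≤ 0 := by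
    intro i _
    by_cases hi : 0 < lam i
    · rw [hsupp i hi]; simp
    · exact mul_nonpos_of_nonpos_of_nonneg (not_lt.1 hi) (sq_nonneg _)
  have hs0 : ∑ i, lam i * (u.repr v i : ℝ) ^ 2 = 0 :=
    le_antisymm (Finset.sum_nonpos hterm) hquad
  have hzero : ∀ i, lam i * (u.repr v i : ℝ) ^ 2 = 0 := by
    intro i
    have hneg := (Finset.sum_eq_zero_iff_of_nonneg (fun i hi =>
      neg_nonneg.2 (hterm i hi))).1
      (by rw [Finset.sum_neg_distrib, hs0, neg_zero]) i (Finset.mem_univ i)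
    linarith [neg_eq_zero.1 hneg]
  have hMv : M *ᵥ v = 0 := by
    rw [mulVec_repr M u lam heig v]
    refine Finset.sum_eq_zero fun i _ => ?_
    have h := hzero i
    have hz : (u.repr v i : ℝ) * lam i = 0 := by
      rcases mul_eq_zero.1 h with h' | h'
      · rw [h']; ring
      · rw [pow_eq_zero_iff (two_ne_zero) |>.1 h']; ring
    rw [hz, zero_smul]
  exact hv0 (h2 v hvV hMv)

/-- Master lemma. -/
lemma master {m n : ℕ} (P : Matrix (Fin m) (Fin m) ℝ) (S : Matrix (Fin m) (Fin n) ℝ)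
    (u : Basis (Fin m) ℝ (Fin m → ℝ)) (lam : Fin m → ℝ)
    (hu : ∀ i j, u i ⬝ᵥ u j = if i = j then 1 else 0)
    (hPu : ∀ i, P *ᵥ u i = lam i • u i)
    (w : Basis (Fin n) ℝ (Fin n → ℝ)) (mu : Fin n → ℝ)
    (hw : ∀ i j, w i ⬝ᵥ w j = if i = j then 1 else 0)
    (hAw : ∀ j, (Sᵀ * P * S) *ᵥ w j = mu j • w j) :
    (P * S).rank ≤ (Finset.univ.filter fun i => 0 < lam i).card
      + (Finset.univ.filter fun j => mu j < 0).card := by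
  classical
  set A := Sᵀ * P * S with hA
  set F : Submodule ℝ (Fin n → ℝ) :=
    Submodule.span ℝ (w '' {j | ¬ mu j < 0}) with hF
  have hFcard : finrank ℝ F = (Finset.univ.filter fun j => ¬ mu j < 0).card := by
    have hli : LinearIndependent ℝ (fun j : {j | ¬ mu j < 0} => w j) :=
      w.linearIndependent.comp _ Subtype.val_injective
    rw [hF, Set.image_eq_range, finrank_span_eq_card hli]
    simp [Fintype.card_subtype]
  have hFsum : (Finset.univ.filter fun j => mu j < 0).card + finrank ℝ F = n := by
    rw [hFcard, Finset.card_filter_add_card_filter_not]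
    simp
  have hFquad : ∀ x ∈ F, 0 ≤ x ⬝ᵥ (A *ᵥ x) := by
    intro x hx
    rw [quad_repr A w mu hw hAw x]
    refine Finset.sum_nonneg fun j _ => ?_
    by_cases hj : mu j < 0
    · have hz : w.repr x j = 0 := by
        have hmem := (Basis.mem_span_image w).1 hx
        by_contra hne
        exact (hmem (Finsupp.mem_support_iff.2 hne)) hj
      rw [hz]; simp
    · exact mul_nonneg (not_lt.1 hj) (sq_nonneg _)
  set f := (P * S).mulVecLin with hf
  set g := f ∘ₗ F.subtype with hg
  obtain ⟨U', hcompl⟩ := Submodule.exists_isCompl (LinearMap.ker g)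
  have hW'U' : finrank ℝ (LinearMap.ker g) + finrank ℝ U' = finrank ℝ F :=
    Submodule.finrank_add_eq_of_isCompl hcompl
  have hkerle : finrank ℝ (LinearMap.ker g) ≤ finrank ℝ (LinearMap.ker f) := by
    have hmap : (LinearMap.ker g).map F.subtype ≤ LinearMap.ker f := by
      rintro x ⟨y, hy, rfl⟩
      exact LinearMap.mem_ker.2 (LinearMap.mem_ker.1 hy)
    calc finrank ℝ (LinearMap.ker g)
        = finrank ℝ ((LinearMap.ker g).map F.subtype) :=
          LinearEquiv.finrank_eq (Submodule.equivMapOfInjective _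
            (Submodule.injective_subtype F) _)
      _ ≤ finrank ℝ (LinearMap.ker f) := Submodule.finrank_mono hmap
  have hrn : finrank ℝ (LinearMap.range f) + finrank ℝ (LinearMap.ker f) = n := by
    simpa using LinearMap.finrank_range_add_finrank_ker f
  set W₀ : Submodule ℝ (Fin n → ℝ) := U'.map F.subtype with hW₀
  have hW₀dim : finrank ℝ W₀ = finrank ℝ U' :=
    (LinearEquiv.finrank_eq (Submodule.equivMapOfInjective _
      (Submodule.injective_subtype F) _)).symm
  have hW₀F : W₀ ≤ F := by
    rintro x ⟨y, _, rfl⟩; exact y.2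
  have hW₀inj : ∀ x ∈ W₀, (P * S) *ᵥ x = 0 → x = 0 := by
    rintro x ⟨y, hy, rfl⟩ hx
    have hyk : y ∈ LinearMap.ker g := LinearMap.mem_ker.2 hx
    have hy0 : y = 0 := by
      have := hcompl.inf_eq_bot ▸ Submodule.mem_inf.2 ⟨hyk, hy⟩
      simpa using this
    rw [hy0]; simp
  set V : Submodule ℝ (Fin m → ℝ) := W₀.map S.mulVecLin with hV
  have hVdim : finrank ℝ V = finrank ℝ W₀ := by
    have hker : LinearMap.ker (S.mulVecLin ∘ₗ W₀.subtype) = ⊥ := by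
      rw [LinearMap.ker_eq_bot']
      intro y hy
      have hPSy : (P * S) *ᵥ (y : Fin n → ℝ) = 0 := by
        rw [← Matrix.mulVec_mulVec]
        have hSy : S *ᵥ (y : Fin n → ℝ) = 0 := hy
        rw [hSy, Matrix.mulVec_zero]
      exact Subtype.ext (hW₀inj _ y.2 hPSy)
    have hrw := LinearMap.finrank_range_add_finrank_ker (S.mulVecLin ∘ₗ W₀.subtype)
    rw [hker, finrank_bot, add_zero, LinearMap.range_comp, Submodule.range_subtype] at hrw
    exact hrw.symm ▸ rfl
  have hidx : finrank ℝ V ≤ (Finset.univ.filter fun i => 0 < lam i).card := by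
    refine index_le P u lam hu hPu V ?_ ?_
    · rintro v ⟨x, hx, rfl⟩
      have heq : (S.mulVecLin x) ⬝ᵥ (P *ᵥ (S.mulVecLin x)) = x ⬝ᵥ (A *ᵥ x) := by
        show (S *ᵥ x) ⬝ᵥ (P *ᵥ (S *ᵥ x)) = x ⬝ᵥ (A *ᵥ x)
        rw [hA, ← Matrix.mulVec_mulVec, ← Matrix.mulVec_mulVec,
          Matrix.dotProduct_mulVec x Sᵀ, Matrix.vecMul_transpose]
      rw [heq]
      exact hFquad x (hW₀F hx)
    · rintro v ⟨x, hx, rfl⟩ hv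
      have hPS : (P * S) *ᵥ x = 0 := by
        rw [← Matrix.mulVec_mulVec]; exact hv
      have hx0 := hW₀inj x hx hPS
      rw [hx0]; simp
  have hrank : (P * S).rank = finrank ℝ (LinearMap.range f) := rfl
  omega

end Stmt7Aux

open Stmt7Aux Finset Module

theorem stmt7 {m n : ℕ} (P : Matrix (Fin m) (Fin m) ℝ) (hP : P.IsHermitian)
    (S : Matrix (Fin m) (Fin n) ℝ) :
    (Sᵀ * P).rank ≤ posEigen P + negEigen (Sᵀ * P * S) ∧
    (Sᵀ * P).rank ≤ negEigen P + posEigen (Sᵀ * P * S) := by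
  classical
  have hPt : Pᵀ = P := by
    ext i j
    simpa using congrFun (congrFun hP.eq i) j
  have hA : (Sᵀ * P * S).IsHermitian := by
    have hS : Sᴴ = Sᵀ := by ext i j; simp [conjTranspose_apply]
    rw [← hS]
    exact Matrix.isHermitian_conjTranspose_mul_mul S hP
  have hrank : (Sᵀ * P).rank = (P * S).rank := by
    rw [← Matrix.rank_transpose (Sᵀ * P), Matrix.transpose_mul, Matrix.transpose_transpose, hPt]
  set u : Basis (Fin m) ℝ (Fin m → ℝ) :=
    hP.eigenvectorBasis.toBasis.map (WithLp.linearEquiv 2 ℝ (Fin m → ℝ)) with hud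
  have hucoe : ∀ i, u i = ⇑(hP.eigenvectorBasis i) := by
    intro i; rw [hud]; simp
  have hu : ∀ i j, u i ⬝ᵥ u j = if i = j then 1 else 0 := by
    intro i j
    have hin := orthonormal_iff_ite.1 hP.eigenvectorBasis.orthonormal i j
    rw [hucoe i, hucoe j, ← hin]
    simp [PiLp.inner_apply, dotProduct, RCLike.inner_apply, mul_comm]
  have hPu : ∀ i, P *ᵥ u i = hP.eigenvalues i • u i := by
    intro i; rw [hucoe i]; exact hP.mulVec_eigenvectorBasis i
  set w : Basis (Fin n) ℝ (Fin n → ℝ) :=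
    hA.eigenvectorBasis.toBasis.map (WithLp.linearEquiv 2 ℝ (Fin n → ℝ)) with hwd
  have hwcoe : ∀ i, w i = ⇑(hA.eigenvectorBasis i) := by
    intro i; rw [hwd]; simp
  have hw : ∀ i j, w i ⬝ᵥ w j = if i = j then 1 else 0 := by
    intro i j
    have hin := orthonormal_iff_ite.1 hA.eigenvectorBasis.orthonormal i j
    rw [hwcoe i, hwcoe j, ← hin]
    simp [PiLp.inner_apply, dotProduct, RCLike.inner_apply, mul_comm]
  have hAw : ∀ i, (Sᵀ * P * S) *ᵥ w i = hA.eigenvalues i • w i := by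
    intro i; rw [hwcoe i]; exact hA.mulVec_eigenvectorBasis i
  rw [posEigen, negEigen, posEigen, negEigen, dif_pos hP, dif_pos hA, dif_pos hA, dif_pos hP]
  constructor
  · rw [hrank]
    exact master P S u hP.eigenvalues hu hPu w hA.eigenvalues hw hAw
  · have hPu' : ∀ i, (-P) *ᵥ u i = (fun i => -hP.eigenvalues i) i • u i := by
      intro i; rw [Matrix.neg_mulVec, hPu i, neg_smul]
    have hAw' : ∀ i, (Sᵀ * (-P) * S) *ᵥ w i = (fun i => -hA.eigenvalues i) i • w i := by
      intro i
      rw [Matrix.mul_neg, Matrix.neg_mul, Matrix.neg_mulVec, hAw i, neg_smul]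
    have h := master (-P) S u (fun i => -hP.eigenvalues i) hu hPu'
      w (fun i => -hA.eigenvalues i) hw hAw'
    have hmvl : ((-P) * S).mulVecLin = -((P * S).mulVecLin) := by
      ext x i
      simp [Matrix.neg_mul, Matrix.neg_mulVec, Matrix.mul_apply, Matrix.mulVec, dotProduct, Pi.single_apply, mul_ite, Finset.sum_ite_eq']
    have hr : ((-P) * S).rank = (P * S).rank := by
      rw [Matrix.rank, Matrix.rank, hmvl, LinearMap.range_neg]
    rw [hr] at h
    rw [hrank]
    refine h.trans (le_of_eq ?_)
    congr 1
    · congr 1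
      ext i
      simp [neg_pos]
    · congr 1
      ext i
      simp [neg_neg, neg_lt_zero]
end

section
/- Suppose a unimodular polynomial matrix identity of the form [[Y, Z],[U, V]] · [[−D, I, −C],[−B, 0, ξI−A]] = [[−P̂, Q̂, 0],[−E, −F, G]] holds, with G ∈ ℝ^{d'×d'}[ξ] nonsingular. Then Δ([−P̂ Q̂]) + deg(det G) = d, where d is the size of A and Δ(R) denotes the maximal degree among all maximal-size minors formed from columns of the full-row-rank polynomial matrix R. -/
open Matrix Polynomial

/-- Δ(R): the maximal degree among the determinants of all maximal-size (p×p)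
    submatrices formed from columns of the p×q polynomial matrix R. -/
noncomputable def maxMinorDeg {p : ℕ} {q : Type*} [Fintype q] [DecidableEq q]
    (R : Matrix (Fin p) q (Polynomial ℝ)) : ℕ :=
  Finset.univ.sup fun f : Fin p ↪ q => (R.submatrix id f).det.natDegree

/-- ξ·I as a polynomial matrix. -/
noncomputable def xiIp (d : ℕ) : Matrix (Fin d) (Fin d) (Polynomial ℝ) :=
  Matrix.diagonal (fun _ => (Polynomial.X : Polynomial ℝ))

/-!
Since the left factor is unimodular, every maximal minor of the right-hand side is a nonzero
constant times the corresponding minor of the pencil `[-D I -C; -B 0 ξI-A]`. Completing `n`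
columns chosen from `[-P̂ Q̂]` by the last `d` columns makes the right-hand side block lower
triangular, so that minor is the chosen minor of `[-P̂ Q̂]` times `det G`. Only the last `d`
columns of the pencil have degree one, so its minors have degree at most `d`, with equality for
the columns of `Q̂`, where the minor is `det (ξI - A)`. Hence every maximal minor of `[-P̂ Q̂]`
has degree at most `deg det Q̂ = d - deg det G`.
-/

theorem Matrix.natDegree_det_le_sum_of_natDegree_col_le {R m : Type*} [CommRing R] [Fintype m]
    [DecidableEq m] (M : Matrix m m R[X]) (c : m → ℕ) (h : ∀ i j, (M i j).natDegree ≤ c j) :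
    M.det.natDegree ≤ ∑ j, c j := by
  rw [det_apply]
  refine natDegree_sum_le_of_forall_le _ _ fun σ _ => (natDegree_smul_le _ _).trans ?_
  exact (natDegree_prod_le _ _).trans (Finset.sum_le_sum fun j _ => h (σ j) j)

theorem Matrix.natDegree_det_fromBlocks_le_card {R m p : Type*} [CommRing R] [Fintype m]
    [Fintype p] [DecidableEq m] [DecidableEq p] (A : Matrix m m R[X]) (B : Matrix m p R[X])
    (C : Matrix p m R[X]) (D : Matrix p p R[X]) (hA : ∀ i j, (A i j).natDegree = 0)
    (hB : ∀ i j, (B i j).natDegree ≤ 1) (hC : ∀ i j, (C i j).natDegree = 0)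
    (hD : ∀ i j, (D i j).natDegree ≤ 1) :
    (fromBlocks A B C D).det.natDegree ≤ Fintype.card p := by
  have := natDegree_det_le_sum_of_natDegree_col_le (fromBlocks A B C D)
    (Sum.elim 0 1) (by rintro (i | i) (j | j) <;> simp [hA, hB, hC, hD])
  simpa [Fintype.sum_sum_type] using this

theorem Matrix.fromBlocks_fromCols_submatrix_sumAssoc {α l m q n₁ n₂ p : Type*}
    (A : Matrix l n₁ α) (B₁ : Matrix l n₂ α) (B₂ : Matrix l p α)
    (C : Matrix m n₁ α) (D₁ : Matrix m n₂ α) (D₂ : Matrix m p α) (f : q → n₁ ⊕ n₂) :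
    (fromBlocks A (fromCols B₁ B₂) C (fromCols D₁ D₂)).submatrix id
        (Equiv.sumAssoc n₁ n₂ p ∘ Sum.map f id) =
      fromBlocks ((fromCols A B₁).submatrix id f) B₂ ((fromCols C D₁).submatrix id f) D₂ := by
  ext (i | i) (j | j) <;> simp <;> rcases f j with k | k <;> simp

@[simp]
theorem Matrix.fromCols_submatrix_id_inr {α m n₁ n₂ : Type*} (A : Matrix m n₁ α)
    (B : Matrix m n₂ α) : (fromCols A B).submatrix id Sum.inr = B :=
  rfl

theorem Matrix.det_submatrix_mul {R m κ : Type*} [CommRing R] [Fintype m] [DecidableEq m]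
    (M : Matrix m m R) (N : Matrix m κ R) (g : m → κ) :
    ((M * N).submatrix id g).det = M.det * (N.submatrix id g).det := by
  rw [← det_mul]
  rfl

theorem Matrix.natDegree_det_fromBlocks_charmatrix_le {R m p q : Type*} [CommRing R]
    [Fintype m] [Fintype p] [DecidableEq m] [DecidableEq p] (D : Matrix m q R) (C' : Matrix m p R)
    (B : Matrix p q R) (A : Matrix p p R) (f : m → q ⊕ m) :
    (fromBlocks ((fromCols (D.map C) 1).submatrix id f) (C'.map C)
      ((fromCols (B.map C) 0).submatrix id f) A.charmatrix).det.natDegree ≤ Fintype.card p := by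
  refine natDegree_det_fromBlocks_le_card _ _ _ _ (fun i j => ?_) (fun i j => by simp)
    (fun i j => ?_) fun i j => (charmatrix_apply_natDegree_le i j).trans (by split_ifs <;> omega)
  · rcases hf : f j with k | k <;> simp [hf, one_apply, apply_ite natDegree]
  · rcases hf : f j with k | k <;> simp [hf]

theorem maxMinorDeg_eq_of_forall_le {p : ℕ} {q : Type*} [Fintype q] [DecidableEq q]
    (R : Matrix (Fin p) q ℝ[X]) (f₀ : Fin p ↪ q)
    (h : ∀ f : Fin p ↪ q, (R.submatrix id f).det.natDegree ≤ (R.submatrix id f₀).det.natDegree) :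
    maxMinorDeg R = (R.submatrix id f₀).det.natDegree :=
  le_antisymm (Finset.sup_le fun f _ => h f)
    (Finset.le_sup (f := fun f : Fin p ↪ q => (R.submatrix id f).det.natDegree)
      (Finset.mem_univ f₀))

theorem xiIp_sub_map_C_eq_charmatrix {d : ℕ} (A : Matrix (Fin d) (Fin d) ℝ) :
    xiIp d - A.map C = A.charmatrix := by
  ext i j
  rw [charmatrix_apply]
  simp [xiIp]

theorem stmt18 {n d : ℕ}
    (Y : Matrix (Fin n) (Fin n) (Polynomial ℝ)) (Z : Matrix (Fin n) (Fin d) (Polynomial ℝ))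
    (U : Matrix (Fin d) (Fin n) (Polynomial ℝ)) (V : Matrix (Fin d) (Fin d) (Polynomial ℝ))
    (Dm : Matrix (Fin n) (Fin n) ℝ) (Cm : Matrix (Fin n) (Fin d) ℝ)
    (Bm : Matrix (Fin d) (Fin n) ℝ) (Am : Matrix (Fin d) (Fin d) ℝ)
    (Phat Qhat : Matrix (Fin n) (Fin n) (Polynomial ℝ))
    (E F : Matrix (Fin d) (Fin n) (Polynomial ℝ)) (G : Matrix (Fin d) (Fin d) (Polynomial ℝ))
    (hUnimod : IsUnit (Matrix.fromBlocks Y Z U V).det)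
    (hG : G.det ≠ 0)
    (hEq : Matrix.fromBlocks Y Z U V *
        Matrix.fromBlocks ((-Dm).map Polynomial.C)
          (Matrix.fromCols (1 : Matrix (Fin n) (Fin n) (Polynomial ℝ))
            ((-Cm).map Polynomial.C))
          ((-Bm).map Polynomial.C)
          (Matrix.fromCols (0 : Matrix (Fin d) (Fin n) (Polynomial ℝ))
            (xiIp d - Am.map Polynomial.C))
      = Matrix.fromBlocks (-Phat) (Matrix.fromCols Qhat 0)
          (-E) (Matrix.fromCols (-F) G)) :
    maxMinorDeg (Matrix.fromCols (-Phat) Qhat) + G.det.natDegree = d := by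
  obtain ⟨r, hr, hMr⟩ := Polynomial.isUnit_iff.mp hUnimod
  rw [xiIp_sub_map_C_eq_charmatrix] at hEq
  have hminor (f : Fin n → Fin n ⊕ Fin n) :
      ((fromCols (-Phat) Qhat).submatrix id f).det * G.det =
        C r * (fromBlocks ((fromCols ((-Dm).map C) 1).submatrix id f) ((-Cm).map C)
          ((fromCols ((-Bm).map C) 0).submatrix id f) Am.charmatrix).det := by
    have := congrArg (fun R => (R.submatrix id (Equiv.sumAssoc _ _ _ ∘ Sum.map f id)).det) hEq
    simpa [det_submatrix_mul, fromBlocks_fromCols_submatrix_sumAssoc, det_fromBlocks_zero₁₂,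
      ← hMr] using this.symm
  have hQ : Qhat.det * G.det = C r * Am.charpoly := by
    simpa [det_fromBlocks_zero₂₁, charpoly] using hminor Sum.inr
  have hQG : Qhat.det.natDegree + G.det.natDegree = d := by
    have hQ0 : Qhat.det ≠ 0 := left_ne_zero_of_mul <|
      hQ ▸ mul_ne_zero (C_ne_zero.mpr hr.ne_zero) (charpoly_monic Am).ne_zero
    rw [← natDegree_mul hQ0 hG, hQ, natDegree_C_mul hr.ne_zero, charpoly_natDegree_eq_dim,
      Fintype.card_fin]
  have hbound (f : Fin n ↪ Fin n ⊕ Fin n) :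
      ((fromCols (-Phat) Qhat).submatrix id f).det.natDegree ≤ Qhat.det.natDegree := by
    by_cases h0 : ((fromCols (-Phat) Qhat).submatrix id f).det = 0
    · simp [h0]
    have hdeg := congrArg natDegree (hminor f)
    rw [natDegree_mul h0 hG, natDegree_C_mul hr.ne_zero] at hdeg
    have hpencil := natDegree_det_fromBlocks_charmatrix_le (-Dm) (-Cm) (-Bm) Am f
    rw [Fintype.card_fin] at hpencil
    omega
  rw [maxMinorDeg_eq_of_forall_le _ Function.Embedding.inr hbound]
  exact hQG
end
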